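/- arXiv:2304.04860 — 2 statements merged into one kernel-verified Lean document; each statement's English description precedes it below -/
import Mathlib

section
/- Let f : ℝ^{n1×n2×n3} → ℝ be differentiable and X* ∈ T_r. Assume: (i) for all X1, X2 with X1 − X2 ∈ T_{3r}, ⟨∇f(X1) − ∇f(X2), X1 − X2⟩ ≥ ρ₃ᵣ⁻‖X1 − X2‖² (tubal-rank restricted strong convexity at rank 3r); (ii) for every subspace Ω spanned by at most three tensors of T_r and all X1, X2 ∈ Ω, ‖P_Ω(∇f(X1) − ∇f(X2))‖² ≤ ρ₃ᵣ⁺⟨∇f(X1) − ∇f(X2), X1 − X2⟩ (restricted co-coercivity), where P_Ω is the orthogonal projection onto Ω. Let γ > 0 satisfy γρ₃ᵣ⁺ ≤ 2 and κ := 2√(1 − (2 − γρ₃ᵣ⁺)γρ₃ᵣ⁻) < 1, and set σ := 2γ‖∇f(X*)‖. Let X⁰ ∈ T_r and, for each t ≥ 0, let X^{t+1} = H_r(X^t − γ∇f(X^t)), where H_r(Z) denotes a best tubal-rank-r approximation of Z (i.e. ‖H_r(Z) − Z‖ ≤ ‖W − Z‖ for all W ∈ T_r). Then for every t ≥ 0,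 ‖X^t − X*‖ ≤ κ^t‖X⁰ − X*‖ + σ/(1 − κ). -/
open scoped RealInnerProductSpace

noncomputable section

/-- Third-order tensors with the Frobenius (Euclidean) inner product structure. -/
abbrev Tensor (n1 n2 n3 : ℕ) : Type := EuclideanSpace ℝ (Fin n1 × Fin n2 × Fin n3)

/-- `unfold X` stacks the frontal slices of `X` vertically: row index `(k, i)`, column `j`. -/
def unfold {n1 n2 n3 : ℕ} (X : Tensor n1 n2 n3) : Matrix (Fin n3 × Fin n1) (Fin n2) ℝ :=
  fun ki j => X (ki.2, j, ki.1)

/-- Block-circulant matrix of a tensor: block `(p, q)` is the frontal slice `(p - q) mod n3`. -/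
def bcirc {n1 n2 n3 : ℕ} (X : Tensor n1 n2 n3) :
    Matrix (Fin n3 × Fin n1) (Fin n3 × Fin n2) ℝ :=
  fun pi qj => X (pi.2, qj.2, pi.1 - qj.1)

/-- The t-product `A * B`, characterized by `unfold (A*B) = bcirc A * unfold B`. -/
def tProd {n1 n2 n4 n3 : ℕ} (A : Tensor n1 n2 n3) (B : Tensor n2 n4 n3) : Tensor n1 n4 n3 :=
  WithLp.toLp 2 (fun ijl : Fin n1 × Fin n4 × Fin n3 => (bcirc A * unfold B) (ijl.2.2, ijl.1) ijl.2.1)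

/-- `Tset n1 n2 n3 r` is the set `T_r` of tensors of tubal rank at most `r`. -/
def Tset (n1 n2 n3 r : ℕ) : Set (Tensor n1 n2 n3) :=
  {X | ∃ (X1 : Tensor n1 r n3) (X2 : Tensor r n2 n3), X = tProd X1 X2}

lemma tProd_apply {n1 n2 n4 n3 : ℕ} (A : Tensor n1 n2 n3) (B : Tensor n2 n4 n3)
    (i : Fin n1) (j : Fin n4) (l : Fin n3) :
    tProd A B (i, j, l) = ∑ q : Fin n3, ∑ s : Fin n2, A (i, s, l - q) * B (s, j, q) := by
  simp [tProd, Matrix.mul_apply, bcirc, unfold, Fintype.sum_prod_type]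

lemma sum_dite_fin {r r' : ℕ} (h : r ≤ r') (f : Fin r → ℝ) :
    ∑ s : Fin r', (if h2 : (s : ℕ) < r then f ⟨s, h2⟩ else 0) = ∑ s : Fin r, f s := by
  rw [Fin.sum_univ_eq_sum_range (fun i => if h2 : i < r then f ⟨i, h2⟩ else 0) r']
  have h1 : ∑ s : Fin r, f s
      = ∑ i ∈ Finset.range r, (fun i => if h2 : i < r then f ⟨i, h2⟩ else 0) i := by
    rw [← Fin.sum_univ_eq_sum_range]
    refine Finset.sum_congr rfl fun s _ => ?_
    simp [s.is_lt]
  rw [h1]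
  exact (Finset.sum_subset (Finset.range_subset_range.mpr h)
    (by intro x _ hx; simp only [Finset.mem_range] at hx; rw [dif_neg hx])).symm

lemma Tset_mono {n1 n2 n3 r r' : ℕ} (h : r ≤ r') : Tset n1 n2 n3 r ⊆ Tset n1 n2 n3 r' := by
  rintro X ⟨X1, X2, rfl⟩
  refine ⟨WithLp.toLp 2 ((fun p => if h2 : (p.2.1 : ℕ) < r then X1 (p.1, ⟨p.2.1, h2⟩, p.2.2) else 0) : Fin n1 × Fin r' × Fin n3 → ℝ),
          WithLp.toLp 2 ((fun p => if h2 : (p.1 : ℕ) < r then X2 (⟨p.1, h2⟩, p.2.1, p.2.2) else 0) : Fin r' × Fin n2 × Fin n3 → ℝ), ?_⟩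
  ext ⟨i, j, l⟩
  rw [tProd_apply, tProd_apply]
  refine Finset.sum_congr rfl fun q _ => ?_
  rw [← sum_dite_fin h (fun s => X1 (i, s, l - q) * X2 (s, j, q))]
  refine Finset.sum_congr rfl fun s _ => ?_
  by_cases h2 : (s : ℕ) < r
  · simp [h2]
  · simp [h2]

lemma add_mem_Tset {n1 n2 n3 a b : ℕ} {X Y : Tensor n1 n2 n3}
    (hX : X ∈ Tset n1 n2 n3 a) (hY : Y ∈ Tset n1 n2 n3 b) :
    X + Y ∈ Tset n1 n2 n3 (a + b) := by
  obtain ⟨A1, A2, rfl⟩ := hX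
  obtain ⟨B1, B2, rfl⟩ := hY
  refine ⟨WithLp.toLp 2 ((fun p => Fin.addCases (fun s => A1 (p.1, s, p.2.2)) (fun s => B1 (p.1, s, p.2.2)) p.2.1) : Fin n1 × Fin (a + b) × Fin n3 → ℝ),
          WithLp.toLp 2 ((fun p => Fin.addCases (fun s => A2 (s, p.2.1, p.2.2)) (fun s => B2 (s, p.2.1, p.2.2)) p.1) : Fin (a + b) × Fin n2 × Fin n3 → ℝ),
          ?_⟩
  ext ⟨i, j, l⟩
  have h0 : (tProd A1 A2 + tProd B1 B2) (i, j, l)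
      = tProd A1 A2 (i, j, l) + tProd B1 B2 (i, j, l) := rfl
  rw [h0, tProd_apply, tProd_apply, tProd_apply, ← Finset.sum_add_distrib]
  refine Finset.sum_congr rfl fun q _ => ?_
  rw [Fin.sum_univ_add]
  simp

lemma neg_mem_Tset {n1 n2 n3 a : ℕ} {X : Tensor n1 n2 n3} (hX : X ∈ Tset n1 n2 n3 a) :
    -X ∈ Tset n1 n2 n3 a := by
  obtain ⟨A1, A2, rfl⟩ := hX
  refine ⟨-A1, A2, ?_⟩
  ext ⟨i, j, l⟩
  have h0 : (-(tProd A1 A2)) (i, j, l) = -(tProd A1 A2 (i, j, l)) := rfl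
  have h1 : ∀ p, (-A1) p = -(A1 p) := fun p => rfl
  rw [h0, tProd_apply, tProd_apply]
  simp [h1, Finset.sum_neg_distrib]

set_option maxHeartbeats 1000000

/-- Theorem 4.2: geometric convergence of the ISTHT iteration
`X^{t+1} = H_r (X^t − γ ∇f(X^t))`. -/
theorem stmt6 {n1 n2 n3 r : ℕ} (f : Tensor n1 n2 n3 → ℝ) (hf : Differentiable ℝ f)
    (Xstar : Tensor n1 n2 n3) (hXstar : Xstar ∈ Tset n1 n2 n3 r)
    (ρm ρp : ℝ) (hρm : 0 < ρm) (hρp : 0 < ρp)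
    (htRSC : ∀ X1 X2 : Tensor n1 n2 n3, X1 - X2 ∈ Tset n1 n2 n3 (3 * r) →
      ρm * ‖X1 - X2‖ ^ 2 ≤ ⟪gradient f X1 - gradient f X2, X1 - X2⟫)
    (hcoco : ∀ A B C : Tensor n1 n2 n3, A ∈ Tset n1 n2 n3 r → B ∈ Tset n1 n2 n3 r →
      C ∈ Tset n1 n2 n3 r →
      ∀ X1 ∈ Submodule.span ℝ {A, B, C}, ∀ X2 ∈ Submodule.span ℝ {A, B, C},
        ‖((Submodule.span ℝ {A, B, C}).orthogonalProjectionOnto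
            (gradient f X1 - gradient f X2) : Tensor n1 n2 n3)‖ ^ 2
          ≤ ρp * ⟪gradient f X1 - gradient f X2, X1 - X2⟫)
    (γ κ σ : ℝ) (hγ : 0 < γ) (hγρp : γ * ρp ≤ 2)
    (hκ : κ = 2 * Real.sqrt (1 - (2 - γ * ρp) * (γ * ρm))) (hκ1 : κ < 1)
    (hσ : σ = 2 * γ * ‖gradient f Xstar‖)
    (Hr : Tensor n1 n2 n3 → Tensor n1 n2 n3)
    (hHr : ∀ Z : Tensor n1 n2 n3, Hr Z ∈ Tset n1 n2 n3 r ∧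
      ∀ W ∈ Tset n1 n2 n3 r, ‖Hr Z - Z‖ ≤ ‖W - Z‖)
    (X : ℕ → Tensor n1 n2 n3) (hX0 : X 0 ∈ Tset n1 n2 n3 r)
    (hrec : ∀ t : ℕ, X (t + 1) = Hr (X t - γ • gradient f (X t))) :
    ∀ t : ℕ, ‖X t - Xstar‖ ≤ κ ^ t * ‖X 0 - Xstar‖ + σ / (1 - κ) := by
  have hκ0 : 0 ≤ κ := by rw [hκ]; positivity
  have hσ0 : 0 ≤ σ := by rw [hσ]; positivity
  have hmem : ∀ t, X t ∈ Tset n1 n2 n3 r := by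
    intro t
    cases t with
    | zero => exact hX0
    | succ t => rw [hrec]; exact (hHr _).1
  have key : ∀ t, ‖X (t + 1) - Xstar‖ ≤ κ * ‖X t - Xstar‖ + σ := by
    intro t
    set Ω := Submodule.span ℝ ({X t, X (t + 1), Xstar} : Set (Tensor n1 n2 n3)) with hΩdef
    have hXt : X t ∈ Ω := Submodule.subset_span (by simp)
    have hXt1 : X (t + 1) ∈ Ω := Submodule.subset_span (by simp)
    have hXs : Xstar ∈ Ω := Submodule.subset_span (by simp)
    set d := X t - Xstar with hd
    set D := X (t + 1) - Xstar with hD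
    have hdΩ : d ∈ Ω := Submodule.sub_mem _ hXt hXs
    have hDΩ : D ∈ Ω := Submodule.sub_mem _ hXt1 hXs
    set g := gradient f (X t) - gradient f Xstar with hg
    set p : Tensor n1 n2 n3 := (Ω.orthogonalProjectionOnto g : Tensor n1 n2 n3) with hp
    -- tubal-rank restricted strong convexity applies to d
    have h3r : d ∈ Tset n1 n2 n3 (3 * r) := by
      have h1 := add_mem_Tset (hmem t) (neg_mem_Tset hXstar)
      rw [← sub_eq_add_neg] at h1
      exact Tset_mono (by omega) h1
    have hI : ρm * ‖d‖ ^ 2 ≤ ⟪g, d⟫ := htRSC (X t) Xstar h3r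
    have hI0 : 0 ≤ ⟪g, d⟫ := le_trans (by positivity) hI
    have hIp : ‖p‖ ^ 2 ≤ ρp * ⟪g, d⟫ :=
      hcoco (X t) (X (t + 1)) Xstar (hmem t) (hmem (t + 1)) hXstar (X t) hXt Xstar hXs
    -- projection identity for members of Ω
    have hproj : ∀ v ∈ Ω, ⟪v, g⟫ = ⟪v, p⟫ := by
      intro v hv
      have h1 : g - p ∈ Ωᗮ := Submodule.sub_starProjection_mem_orthogonal g
      have h2 := Submodule.inner_right_of_mem_orthogonal hv h1
      rw [inner_sub_right] at h2
      linarith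
    -- contraction bound for the projected gradient step
    have hκsq : 1 - (2 - γ * ρp) * (γ * ρm) ≤ (κ / 2) ^ 2 := by
      rw [hκ]
      have h2 : 2 * Real.sqrt (1 - (2 - γ * ρp) * (γ * ρm)) / 2
          = Real.sqrt (1 - (2 - γ * ρp) * (γ * ρm)) := by ring
      rw [h2]
      rcases le_or_gt 0 (1 - (2 - γ * ρp) * (γ * ρm)) with h | h
      · rw [Real.sq_sqrt h]
      · have h3 := Real.sqrt_nonneg (1 - (2 - γ * ρp) * (γ * ρm))
        nlinarith
    have hc : ‖d - γ • p‖ ^ 2 ≤ (κ / 2) ^ 2 * ‖d‖ ^ 2 := by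
      have e1 : ‖d - γ • p‖ ^ 2 = ‖d‖ ^ 2 - 2 * (γ * ⟪d, p⟫) + γ ^ 2 * ‖p‖ ^ 2 := by
        rw [norm_sub_sq_real, real_inner_smul_right, norm_smul]
        rw [Real.norm_eq_abs, mul_pow, sq_abs]
      have e2 : ⟪d, p⟫ = ⟪g, d⟫ := by
        rw [← hproj d hdΩ, real_inner_comm]
      rw [e1, e2]
      nlinarith [mul_le_mul_of_nonneg_left hIp (sq_nonneg γ),
        mul_le_mul_of_nonneg_left hI (mul_nonneg hγ.le (by linarith : (0:ℝ) ≤ 2 - γ * ρp)),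
        mul_le_mul_of_nonneg_right hκsq (sq_nonneg ‖d‖)]
    have hPd : ‖d - γ • p‖ ≤ κ / 2 * ‖d‖ := by
      have h1 : 0 ≤ κ / 2 * ‖d‖ := by positivity
      calc ‖d - γ • p‖ = Real.sqrt (‖d - γ • p‖ ^ 2) := (Real.sqrt_sq (norm_nonneg _)).symm
        _ ≤ Real.sqrt ((κ / 2) ^ 2 * ‖d‖ ^ 2) := Real.sqrt_le_sqrt hc
        _ = κ / 2 * ‖d‖ := by rw [← mul_pow, Real.sqrt_sq h1]
    -- the hard-thresholding step inequality
    have hstep : ‖D‖ ^ 2 ≤ 2 * ⟪D, (X t - γ • gradient f (X t)) - Xstar⟫ := by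
      set Z := X t - γ • gradient f (X t) with hZ
      have happ : ‖X (t + 1) - Z‖ ≤ ‖Xstar - Z‖ := by
        rw [hrec]; exact (hHr _).2 Xstar hXstar
      have hid : D = (X (t + 1) - Z) - (Xstar - Z) := by rw [hD]; abel
      have hexp : ‖D‖ ^ 2 = ‖X (t + 1) - Z‖ ^ 2
          - 2 * ⟪X (t + 1) - Z, Xstar - Z⟫ + ‖Xstar - Z‖ ^ 2 := by
        rw [hid]; exact norm_sub_sq_real _ _
      have hid2 : Z - Xstar = -(Xstar - Z) := by abel
      have hin : ⟪D, Z - Xstar⟫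
          = -⟪X (t + 1) - Z, Xstar - Z⟫ + ‖Xstar - Z‖ ^ 2 := by
        rw [hid, hid2, inner_neg_right, inner_sub_left, real_inner_self_eq_norm_sq]
        ring
      have hsq : ‖X (t + 1) - Z‖ * ‖X (t + 1) - Z‖ ≤ ‖Xstar - Z‖ * ‖Xstar - Z‖ :=
        mul_self_le_mul_self (norm_nonneg _) happ
      nlinarith [hexp, hin, hsq]
    -- expand the inner product
    have hvec : (X t - γ • gradient f (X t)) - Xstar
        = (d - γ • p) + γ • (p - g) - γ • gradient f Xstar := by
      rw [hd, hg]
      simp only [smul_sub]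
      abel
    have hDpg : ⟪D, p - g⟫ = 0 := by
      have h1 := hproj D hDΩ
      rw [inner_sub_right]
      linarith
    have hinner : ⟪D, (X t - γ • gradient f (X t)) - Xstar⟫
        = ⟪D, d - γ • p⟫ - γ * ⟪D, gradient f Xstar⟫ := by
      rw [hvec, inner_sub_right, inner_add_right, real_inner_smul_right,
        real_inner_smul_right, hDpg]
      ring
    have hCS1 : ⟪D, d - γ • p⟫ ≤ ‖D‖ * (κ / 2 * ‖d‖) :=
      le_trans (real_inner_le_norm _ _) (mul_le_mul_of_nonneg_left hPd (norm_nonneg D))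
    have hCS2 : -⟪D, gradient f Xstar⟫ ≤ ‖D‖ * ‖gradient f Xstar‖ := by
      have h1 := abs_real_inner_le_norm D (gradient f Xstar)
      have h2 := (abs_le.mp h1).1
      linarith
    have hCS2' : -(γ * ⟪D, gradient f Xstar⟫) ≤ γ * (‖D‖ * ‖gradient f Xstar‖) := by
      have := mul_le_mul_of_nonneg_left hCS2 hγ.le
      linarith [this]
    have hfinal : ‖D‖ ^ 2 ≤ ‖D‖ * (κ * ‖d‖ + σ) := by
      rw [hσ]
      nlinarith [hstep, hinner, hCS1, hCS2']
    rcases (norm_nonneg D).eq_or_lt with h0 | h0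
    · rw [← h0]
      positivity
    · nlinarith [hfinal, h0]
  intro t
  induction t with
  | zero =>
    simp only [pow_zero, one_mul]
    have : 0 ≤ σ / (1 - κ) := div_nonneg hσ0 (by linarith)
    linarith
  | succ t ih =>
    have h1 : κ * ‖X t - Xstar‖ + σ ≤ κ * (κ ^ t * ‖X 0 - Xstar‖ + σ / (1 - κ)) + σ := by
      nlinarith [key t, ih]
    have h2 : κ * (κ ^ t * ‖X 0 - Xstar‖ + σ / (1 - κ)) + σ
        = κ ^ (t + 1) * ‖X 0 - Xstar‖ + σ / (1 - κ) := by
      have hne : (1 : ℝ) - κ ≠ 0 := by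
        intro h; rw [sub_eq_zero] at h; exact absurd h.symm (ne_of_lt hκ1)
      field_simp
      ring
    calc ‖X (t + 1) - Xstar‖ ≤ κ * ‖X t - Xstar‖ + σ := key t
      _ ≤ _ := h1
      _ = _ := h2
end
end

section
/- Let A : ℝ^{n1×n2×n3} → ℝ^m be a linear map satisfying the tRIP with constants δ_{2r} and δ_{3r} in (0,1). Let X* ∈ T_r, e ∈ ℝ^m with ‖e‖ ≤ ε, and y = A(X*) + e. Let γ > 0 be such that κ := 2(|1−γ| + γδ_{3r}) < 1, and set σ := 2γε√(1+δ_{2r}). Let X⁰ ∈ T_r and, for each t ≥ 0, let X^{t+1} = H_r(X^t − γA*(A(X^t) − y)), where H_r(Z) denotes a best tubal-rank-r approximation of Z (i.e. ‖H_r(Z) − Z‖ ≤ ‖W − Z‖ for all W ∈ T_r) and A* is the adjoint of A. Then for every t ≥ 0, ‖X^t − X*‖ ≤ κ^t‖X⁰ − X*‖ + σ/(1 − κ). -/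
open scoped RealInnerProductSpace

noncomputable section

lemma tset_cast {n1 n2 n3 r1 r2 : ℕ} (h : r1 = r2) :
    Tset n1 n2 n3 r1 = Tset n1 n2 n3 r2 := by subst h; rfl

lemma tProd_smul_left {n1 n2 n3 r : ℕ} (c : ℝ) (A : Tensor n1 r n3) (B : Tensor r n2 n3) :
    tProd (c • A) B = c • tProd A B := by
  ext p
  simp [tProd, bcirc, unfold, Matrix.mul_apply, PiLp.smul_apply, smul_eq_mul,
    Finset.mul_sum, mul_assoc]

lemma tset_smul {n1 n2 n3 r : ℕ} (c : ℝ) {X : Tensor n1 n2 n3}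
    (h : X ∈ Tset n1 n2 n3 r) : c • X ∈ Tset n1 n2 n3 r := by
  obtain ⟨X1, X2, rfl⟩ := h
  exact ⟨c • X1, X2, (tProd_smul_left c X1 X2).symm⟩

lemma tset_add {n1 n2 n3 r1 r2 : ℕ} {X Y : Tensor n1 n2 n3}
    (hX : X ∈ Tset n1 n2 n3 r1) (hY : Y ∈ Tset n1 n2 n3 r2) :
    X + Y ∈ Tset n1 n2 n3 (r1 + r2) := by
  obtain ⟨A1, A2, rfl⟩ := hX
  obtain ⟨B1, B2, rfl⟩ := hY
  refine ⟨(WithLp.toLp 2 (fun p : Fin n1 × Fin (r1 + r2) × Fin n3 => Fin.addCases (fun j => A1 (p.1, j, p.2.2)) (fun j => B1 (p.1, j, p.2.2)) p.2.1) :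
      Tensor n1 (r1 + r2) n3),
    (WithLp.toLp 2 (fun p : Fin (r1 + r2) × Fin n2 × Fin n3 => Fin.addCases (fun i => A2 (i, p.2.1, p.2.2)) (fun i => B2 (i, p.2.1, p.2.2)) p.1) :
      Tensor (r1 + r2) n2 n3), ?_⟩
  ext p
  simp only [PiLp.add_apply, tProd, PiLp.toLp_apply, Matrix.mul_apply, bcirc, unfold,
    Fintype.sum_prod_type, Fin.sum_univ_add, Fin.addCases_left, Fin.addCases_right,
    Finset.sum_add_distrib]

lemma polar_half {E F : Type*} [NormedAddCommGroup E] [InnerProductSpace ℝ E]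
    [NormedAddCommGroup F] [InnerProductSpace ℝ F]
    (A : E →ₗ[ℝ] F) (δ : ℝ) (U W : E)
    (h1 : ‖A (U + W)‖ ^ 2 ≤ (1 + δ) * ‖U + W‖ ^ 2)
    (h2 : (1 - δ) * ‖U - W‖ ^ 2 ≤ ‖A (U - W)‖ ^ 2)
    (h3 : ‖A (U - W)‖ ^ 2 ≤ (1 + δ) * ‖U - W‖ ^ 2)
    (h4 : (1 - δ) * ‖U + W‖ ^ 2 ≤ ‖A (U + W)‖ ^ 2) :
    |⟪A U, A W⟫ - ⟪U, W⟫| ≤ δ * (‖U‖ ^ 2 + ‖W‖ ^ 2) / 2 := by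
  have e1 := norm_add_sq_real U W
  have e2 := norm_sub_sq_real U W
  have e3 := norm_add_sq_real (A U) (A W)
  have e4 := norm_sub_sq_real (A U) (A W)
  rw [map_add] at h1 h4
  rw [map_sub] at h2 h3
  rw [e1] at h1 h4
  rw [e2] at h2 h3
  rw [e3] at h1 h4
  rw [e4] at h2 h3
  ring_nf at h1 h2 h3 h4 ⊢
  rw [abs_le]
  constructor <;> nlinarith [h1, h2, h3, h4]

lemma rip_inner {E F : Type*} [NormedAddCommGroup E] [InnerProductSpace ℝ E]
    [NormedAddCommGroup F] [InnerProductSpace ℝ F]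
    (A : E →ₗ[ℝ] F) (δ : ℝ) (U W : E)
    (h : ∀ a b : ℝ, (1 - δ) * ‖a • U + b • W‖ ^ 2 ≤ ‖A (a • U + b • W)‖ ^ 2 ∧
      ‖A (a • U + b • W)‖ ^ 2 ≤ (1 + δ) * ‖a • U + b • W‖ ^ 2) :
    |⟪A U, A W⟫ - ⟪U, W⟫| ≤ δ * (‖U‖ * ‖W‖) := by
  by_cases hU : U = 0
  · simp [hU]
  by_cases hW : W = 0
  · simp [hW]
  have hUn : (0:ℝ) < ‖U‖ := norm_pos_iff.mpr hU
  have hWn : (0:ℝ) < ‖W‖ := norm_pos_iff.mpr hW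
  set t : ℝ := Real.sqrt (‖W‖ / ‖U‖) with ht
  have htpos : 0 < t := Real.sqrt_pos.mpr (by positivity)
  have ht2 : t ^ 2 = ‖W‖ / ‖U‖ := Real.sq_sqrt (by positivity)
  set U' : E := t • U with hU'
  set W' : E := (t⁻¹) • W with hW'
  have hs1 : U' + W' = t • U + t⁻¹ • W := rfl
  have hs2 : U' - W' = t • U + (-t⁻¹) • W := by rw [hU', hW', neg_smul]; abel
  have h1 := (h t t⁻¹).2
  have h4 := (h t t⁻¹).1
  have h2 := (h t (-t⁻¹)).1
  have h3 := (h t (-t⁻¹)).2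
  rw [← hs1] at h1 h4
  rw [← hs2] at h2 h3
  have key := polar_half A δ U' W' h1 h2 h3 h4
  have hAI : ⟪A U', A W'⟫ = ⟪A U, A W⟫ := by
    rw [hU', hW', map_smul, map_smul, real_inner_smul_left, real_inner_smul_right]
    field_simp
  have hI : ⟪U', W'⟫ = ⟪U, W⟫ := by
    rw [hU', hW', real_inner_smul_left, real_inner_smul_right]
    field_simp
  have hnU' : ‖U'‖ ^ 2 = ‖U‖ * ‖W‖ := by
    rw [hU', norm_smul, Real.norm_eq_abs, abs_of_pos htpos, mul_pow, ht2]
    field_simp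
  have hnW' : ‖W'‖ ^ 2 = ‖U‖ * ‖W‖ := by
    rw [hW', norm_smul, Real.norm_eq_abs, abs_of_pos (inv_pos.mpr htpos), mul_pow,
      inv_pow, ht2]
    field_simp
  rw [hAI, hI, hnU', hnW'] at key
  linarith

lemma step_bound {E F : Type*} [NormedAddCommGroup E] [InnerProductSpace ℝ E]
    [FiniteDimensional ℝ E] [NormedAddCommGroup F] [InnerProductSpace ℝ F]
    [FiniteDimensional ℝ F]
    (A : E →ₗ[ℝ] F) (γ δ3 ε s κ σ : ℝ) (hγ : 0 < γ) (hε : 0 ≤ ε) (hδ3 : 0 ≤ δ3)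
    (hs : 0 ≤ s) (V Et : E) (ee : F) (he : ‖ee‖ ≤ ε)
    (hsq : ‖V‖ ^ 2 ≤ 2 * ⟪V, Et - γ • (LinearMap.adjoint A) (A Et - ee)⟫)
    (hrip : |⟪A V, A Et⟫ - ⟪V, Et⟫| ≤ δ3 * (‖V‖ * ‖Et‖))
    (hAV : ‖A V‖ ≤ s * ‖V‖)
    (hκ : κ = 2 * (|1 - γ| + γ * δ3)) (hσ : σ = 2 * γ * ε * s) :
    ‖V‖ ≤ κ * ‖Et‖ + σ := by
  rw [inner_sub_right, real_inner_smul_right, LinearMap.adjoint_inner_right,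
    inner_sub_right] at hsq
  have hCS1 : (1 - γ) * ⟪V, Et⟫ ≤ |1 - γ| * (‖V‖ * ‖Et‖) := by
    calc (1 - γ) * ⟪V, Et⟫ ≤ |(1 - γ) * ⟪V, Et⟫| := le_abs_self _
      _ = |1 - γ| * |⟪V, Et⟫| := abs_mul _ _
      _ ≤ |1 - γ| * (‖V‖ * ‖Et‖) :=
        mul_le_mul_of_nonneg_left (abs_real_inner_le_norm V Et) (abs_nonneg _)
  have hCS2 : -(⟪A V, A Et⟫ - ⟪V, Et⟫) ≤ δ3 * (‖V‖ * ‖Et‖) :=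
    le_trans (neg_le_abs _) hrip
  have hCS3 : ⟪A V, ee⟫ ≤ s * ‖V‖ * ε := by
    calc ⟪A V, ee⟫ ≤ ‖A V‖ * ‖ee‖ := real_inner_le_norm _ _
      _ ≤ (s * ‖V‖) * ε := by
        apply mul_le_mul hAV he (norm_nonneg _)
        positivity
  have hmain : ‖V‖ ^ 2 ≤ (κ * ‖Et‖ + σ) * ‖V‖ := by
    have hsq2 : ‖V‖ ^ 2 ≤ 2 * ((1 - γ) * ⟪V, Et⟫ - γ * (⟪A V, A Et⟫ - ⟪V, Et⟫)
        + γ * ⟪A V, ee⟫) := by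
      calc ‖V‖ ^ 2 ≤ 2 * (⟪V, Et⟫ - γ * (⟪A V, A Et⟫ - ⟪A V, ee⟫)) := hsq
        _ = 2 * ((1 - γ) * ⟪V, Et⟫ - γ * (⟪A V, A Et⟫ - ⟪V, Et⟫) + γ * ⟪A V, ee⟫) := by
          ring
    rw [hκ, hσ]
    nlinarith [mul_le_mul_of_nonneg_left hCS2 hγ.le,
      mul_le_mul_of_nonneg_left hCS3 hγ.le]
  rcases eq_or_lt_of_le (norm_nonneg V) with h0 | hVpos
  · rw [← h0]
    have h1 : 0 ≤ κ := by rw [hκ]; positivity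
    have h2 : 0 ≤ σ := by rw [hσ]; positivity
    have h3 : 0 ≤ κ * ‖Et‖ := mul_nonneg h1 (norm_nonneg _)
    linarith
  · nlinarith [hmain, hVpos]

/-- Theorem 4.3: geometric convergence of ISTHT for noisy linear measurements. -/
theorem stmt13 {n1 n2 n3 m r : ℕ}
    (A : Tensor n1 n2 n3 →ₗ[ℝ] EuclideanSpace ℝ (Fin m)) (δ2r δ3r : ℝ)
    (hδ2r0 : 0 < δ2r) (hδ2r1 : δ2r < 1) (hδ3r0 : 0 < δ3r) (hδ3r1 : δ3r < 1)
    (htRIP2r : ∀ X ∈ Tset n1 n2 n3 (2 * r),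
      (1 - δ2r) * ‖X‖ ^ 2 ≤ ‖A X‖ ^ 2 ∧ ‖A X‖ ^ 2 ≤ (1 + δ2r) * ‖X‖ ^ 2)
    (htRIP3r : ∀ X ∈ Tset n1 n2 n3 (3 * r),
      (1 - δ3r) * ‖X‖ ^ 2 ≤ ‖A X‖ ^ 2 ∧ ‖A X‖ ^ 2 ≤ (1 + δ3r) * ‖X‖ ^ 2)
    (Xstar : Tensor n1 n2 n3) (hXstar : Xstar ∈ Tset n1 n2 n3 r)
    (e : EuclideanSpace ℝ (Fin m)) (ε : ℝ) (he : ‖e‖ ≤ ε)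
    (y : EuclideanSpace ℝ (Fin m)) (hy : y = A Xstar + e)
    (γ κ σ : ℝ) (hγ : 0 < γ)
    (hκ : κ = 2 * (|1 - γ| + γ * δ3r)) (hκ1 : κ < 1)
    (hσ : σ = 2 * γ * ε * Real.sqrt (1 + δ2r))
    (Hr : Tensor n1 n2 n3 → Tensor n1 n2 n3)
    (hHr : ∀ Z : Tensor n1 n2 n3, Hr Z ∈ Tset n1 n2 n3 r ∧
      ∀ W ∈ Tset n1 n2 n3 r, ‖Hr Z - Z‖ ≤ ‖W - Z‖)
    (X : ℕ → Tensor n1 n2 n3) (hX0 : X 0 ∈ Tset n1 n2 n3 r)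
    (hrec : ∀ t : ℕ, X (t + 1) = Hr (X t - γ • LinearMap.adjoint A (A (X t) - y))) :
    ∀ t : ℕ, ‖X t - Xstar‖ ≤ κ ^ t * ‖X 0 - Xstar‖ + σ / (1 - κ) := by
  have hε0 : 0 ≤ ε := le_trans (norm_nonneg e) he
  have hκ0 : 0 ≤ κ := by rw [hκ]; positivity
  have hσ0 : 0 ≤ σ := by rw [hσ]; positivity
  have h1κ : 0 < 1 - κ := by linarith
  have memX : ∀ t : ℕ, X t ∈ Tset n1 n2 n3 r := by
    intro t
    cases t with
    | zero => exact hX0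
    | succ t => rw [hrec t]; exact (hHr _).1
  have key : ∀ t : ℕ, ‖X (t + 1) - Xstar‖ ≤ κ * ‖X t - Xstar‖ + σ := by
    intro t
    have hbest : ‖X (t + 1) - (X t - γ • LinearMap.adjoint A (A (X t) - y))‖ ≤
        ‖Xstar - (X t - γ • LinearMap.adjoint A (A (X t) - y))‖ := by
      rw [hrec t]; exact (hHr _).2 Xstar hXstar
    have hAE : A (X t) - y = A (X t - Xstar) - e := by
      rw [hy, map_sub]; abel
    have hsq : ‖X (t + 1) - Xstar‖ ^ 2 ≤ 2 * ⟪X (t + 1) - Xstar,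
        (X t - Xstar) - γ • LinearMap.adjoint A (A (X t - Xstar) - e)⟫ := by
      have hb2 := pow_le_pow_left₀ (norm_nonneg _) hbest 2
      rw [hAE] at hb2
      have hde : X (t + 1) - (X t - γ • LinearMap.adjoint A (A (X t - Xstar) - e)) =
          (X (t + 1) - Xstar) +
            (Xstar - (X t - γ • LinearMap.adjoint A (A (X t - Xstar) - e))) := by
        abel
      rw [hde, norm_add_sq_real] at hb2
      have h6 : ⟪X (t + 1) - Xstar,
          Xstar - (X t - γ • LinearMap.adjoint A (A (X t - Xstar) - e))⟫ =
          -⟪X (t + 1) - Xstar,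
            (X t - Xstar) - γ • LinearMap.adjoint A (A (X t - Xstar) - e)⟫ := by
        rw [← inner_neg_right]
        congr 1
        abel
      rw [h6] at hb2
      linarith
    have hVmem : X (t + 1) - Xstar ∈ Tset n1 n2 n3 (2 * r) := by
      have h1 : X (t + 1) + (-1 : ℝ) • Xstar ∈ Tset n1 n2 n3 (r + r) :=
        tset_add (memX (t + 1)) (tset_smul (-1) hXstar)
      have h2 : X (t + 1) - Xstar = X (t + 1) + (-1 : ℝ) • Xstar := by
        rw [neg_one_smul, sub_eq_add_neg]
      rw [h2, tset_cast (two_mul r)]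
      exact h1
    have hcomb : ∀ a b : ℝ,
        a • (X (t + 1) - Xstar) + b • (X t - Xstar) ∈ Tset n1 n2 n3 (3 * r) := by
      intro a b
      have h1 : a • X (t + 1) + (b • X t + (-(a + b)) • Xstar) ∈
          Tset n1 n2 n3 (r + (r + r)) :=
        tset_add (tset_smul a (memX (t + 1)))
          (tset_add (tset_smul b (memX t)) (tset_smul _ hXstar))
      have h2 : a • (X (t + 1) - Xstar) + b • (X t - Xstar) =
          a • X (t + 1) + (b • X t + (-(a + b)) • Xstar) := by
        module
      rw [h2, tset_cast (show 3 * r = r + (r + r) by ring)]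
      exact h1
    have hrip : |⟪A (X (t + 1) - Xstar), A (X t - Xstar)⟫ -
        ⟪X (t + 1) - Xstar, X t - Xstar⟫| ≤
        δ3r * (‖X (t + 1) - Xstar‖ * ‖X t - Xstar‖) :=
      rip_inner A δ3r _ _ (fun a b => ⟨(htRIP3r _ (hcomb a b)).1, (htRIP3r _ (hcomb a b)).2⟩)
    have hAV : ‖A (X (t + 1) - Xstar)‖ ≤ Real.sqrt (1 + δ2r) * ‖X (t + 1) - Xstar‖ := by
      have h1 := (htRIP2r _ hVmem).2
      have h2 : Real.sqrt (‖A (X (t + 1) - Xstar)‖ ^ 2) ≤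
          Real.sqrt ((1 + δ2r) * ‖X (t + 1) - Xstar‖ ^ 2) := Real.sqrt_le_sqrt h1
      rwa [Real.sqrt_sq (norm_nonneg _), Real.sqrt_mul (by positivity),
        Real.sqrt_sq (norm_nonneg _)] at h2
    exact step_bound A γ δ3r ε (Real.sqrt (1 + δ2r)) κ σ hγ hε0 hδ3r0.le
      (Real.sqrt_nonneg _) _ _ e he hsq hrip hAV hκ hσ
  intro t
  induction t with
  | zero =>
    have : 0 ≤ σ / (1 - κ) := div_nonneg hσ0 h1κ.le
    simp only [pow_zero, one_mul]
    linarith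
  | succ t ih =>
    have h1 := key t
    have h2 : κ * ‖X t - Xstar‖ ≤ κ * (κ ^ t * ‖X 0 - Xstar‖ + σ / (1 - κ)) :=
      mul_le_mul_of_nonneg_left ih hκ0
    have h3 : κ * (σ / (1 - κ)) + σ = σ / (1 - κ) := by
      field_simp
      ring
    calc ‖X (t + 1) - Xstar‖ ≤ κ * ‖X t - Xstar‖ + σ := h1
      _ ≤ κ * (κ ^ t * ‖X 0 - Xstar‖ + σ / (1 - κ)) + σ := by linarith
      _ = κ ^ (t + 1) * ‖X 0 - Xstar‖ + (κ * (σ / (1 - κ)) + σ) := by ring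
      _ = κ ^ (t + 1) * ‖X 0 - Xstar‖ + σ / (1 - κ) := by rw [h3]

end
end
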